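/- Assume Y₀, τ, τ̃ are integrable. Then the mean of the cycle increment is E[X₁] = (E[Y₀] − E[τ̃]) + P(τ̃ ≤ ξ) [ (E[N] − 1)(E[Y₀] − E[τ ∣ τ ≤ ξ]) + (E[Y₀] − E[τ ∣ τ > ξ]) ], where E[N] = 1/P(τ > ξ). -/

import Mathlib

/-!
On the event `{τ̃ ≤ ξ}` the cycle adds the random sum `cycleSum Y τle τgt N`, and `N` is
independent of `τ̃` and of all claims and inter-arrival times. On `{N = n}` the contribution
therefore has mean `ℙ(τ̃ ≤ ξ) ((n - 1) (E Y − E[τ | τ ≤ ξ]) + (E Y − E[τ | τ > ξ]))`, which is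
affine in `n`; summing it against the geometric law of `N`, whose mean is `1 / p`, is Wald's
identity. The same computation for absolute values shows that the random sum is integrable.
-/

open MeasureTheory ProbabilityTheory Filter Set

/-- The increment of the claim surplus process over one regenerative cycle:
`X₁ = (Y₀ − τ̃) + 1_{τ̃ ≤ ξ} ( ∑_{k=1}^{N−1} (Y_k − τ_k^{≤ξ}) + (Y_N − τ_N^{>ξ}) )`. -/
noncomputable def cycleIncrement {Ω : Type*} (ξ : ℝ) (τt τgt : Ω → ℝ)
    (Y τle : ℕ → Ω → ℝ) (N : Ω → ℕ) (ω : Ω) : ℝ :=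
  (Y 0 ω - τt ω) +
    (if τt ω ≤ ξ then
        (∑ k ∈ Finset.Icc 1 (N ω - 1), (Y k ω - τle k ω)) + (Y (N ω) ω - τgt ω)
      else 0)

/-- The family of all sources of randomness in the regenerative cycle, used to express
their mutual independence: the claims `Y k`, the variables `τ_k^{≤ξ}`, together with
`τ̃`, `τ^{>ξ}` and (coerced to `ℝ`) the geometric variable `N`. -/
noncomputable def cycleFamily {Ω : Type*} (τt τgt : Ω → ℝ)
    (Y τle : ℕ → Ω → ℝ) (N : Ω → ℕ) : ℕ ⊕ (ℕ ⊕ Fin 3) → Ω → ℝ :=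
  Sum.elim Y (Sum.elim τle
    (fun j => if j = 0 then τt else if j = 1 then τgt else fun ω => (N ω : ℝ)))

theorem MeasureTheory.Integrable.cond {Ω E : Type*} {mΩ : MeasurableSpace Ω} {μ : Measure Ω}
    [NormedAddCommGroup E] {f : Ω → E} (hf : Integrable f μ) (s : Set Ω) :
    Integrable f μ[|s] := by
  by_cases hs : μ s = 0
  · rw [cond_eq_zero_of_meas_eq_zero hs]
    exact integrable_zero_measure
  · exact hf.restrict.smul_measure (ENNReal.inv_ne_top.2 hs)

section RandomIndex

variable {Ω ι β : Type*} {mΩ : MeasurableSpace Ω} {μ : Measure Ω}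

theorem ProbabilityTheory.IndepFun.setIntegral_preimage_eq_mul [MeasurableSpace β] {X : Ω → β}
    {Z : Ω → ℝ} (hXZ : IndepFun X Z μ) (hX : Measurable X) (hZ : AEMeasurable Z μ) {s : Set β}
    (hs : MeasurableSet s) :
    ∫ ω in X ⁻¹' s, Z ω ∂μ = μ.real (X ⁻¹' s) * ∫ ω, Z ω ∂μ :=
  ((IndepFun_iff_Indep X Z μ).1 hXZ).setIntegral_eq_mul (f := id) hX.comap_le hZ ⟨s, hs, rfl⟩
    aestronglyMeasurable_id

variable [MeasurableSpace ι] [MeasurableSingletonClass ι] {T : Ω → ι} {G : ι → Ω → ℝ}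

theorem setIntegral_randomIndex_eq_mul {i : ι} (hT : Measurable T) (hG : AEMeasurable (G i) μ)
    (hind : IndepFun T (G i) μ) :
    ∫ ω in T ⁻¹' {i}, G (T ω) ω ∂μ = μ.real (T ⁻¹' {i}) * ∫ ω, G i ω ∂μ := by
  rw [← hind.setIntegral_preimage_eq_mul hT hG (measurableSet_singleton i)]
  exact setIntegral_congr_fun (hT (measurableSet_singleton i)) fun ω hω => by
    simp only [show T ω = i from hω]

variable [Countable ι]

theorem integrable_randomIndex_of_indepFun (hT : Measurable T) (hG : ∀ i, Integrable (G i) μ)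
    (hind : ∀ i, IndepFun T (G i) μ)
    (hsum : Summable fun i => μ.real (T ⁻¹' {i}) * ∫ ω, |G i ω| ∂μ) :
    Integrable (fun ω => G (T ω) ω) μ := by
  have hcover : (⋃ i, T ⁻¹' {i}) = univ := by ext; simp
  rw [← integrableOn_univ, ← hcover]
  refine integrableOn_iUnion_of_summable_integral_norm (fun i => ?_) (hsum.congr fun i => ?_)
  · exact (hG i).integrableOn.congr_fun (fun ω hω => by simp only [show T ω = i from hω])
      (hT (measurableSet_singleton i))
  · exact (setIntegral_randomIndex_eq_mul (G := fun i ω => |G i ω|) hT (hG i).1.aemeasurable.abs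
      ((hind i).comp measurable_id measurable_abs)).symm

theorem hasSum_integral_randomIndex_of_indepFun (hT : Measurable T)
    (hG : ∀ i, AEMeasurable (G i) μ) (hind : ∀ i, IndepFun T (G i) μ)
    (hint : Integrable (fun ω => G (T ω) ω) μ) :
    HasSum (fun i => μ.real (T ⁻¹' {i}) * ∫ ω, G i ω ∂μ) (∫ ω, G (T ω) ω ∂μ) := by
  have hcover : (⋃ i, T ⁻¹' {i}) = univ := by ext; simp
  have h := hasSum_integral_iUnion (fun i => hT (measurableSet_singleton i))
    (fun i j hij => (disjoint_singleton.2 hij).preimage T)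
    (by rw [hcover]; exact hint.integrableOn)
  rw [hcover, setIntegral_univ] at h
  exact h.congr_fun fun i => (setIntegral_randomIndex_eq_mul hT (hG i) (hind i)).symm

end RandomIndex

section Geometric

variable {Ω : Type*} {mΩ : MeasurableSpace Ω} {μ : Measure Ω} {N : Ω → ℕ} {p : ℝ}

theorem measure_preimage_succ_of_geometric
    (hlaw : ∀ k : ℕ, 1 ≤ k → μ {ω | N ω = k} = ENNReal.ofReal ((1 - p) ^ (k - 1) * p)) (m : ℕ) :
    μ (N ⁻¹' {m + 1}) = ENNReal.ofReal ((1 - p) ^ m * p) := by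
  have h := hlaw (m + 1) m.succ_pos
  rwa [Nat.add_sub_cancel] at h

variable [IsProbabilityMeasure μ]

theorem measure_preimage_zero_of_geometric (hN : Measurable N) (hp0 : 0 < p) (hp1 : p ≤ 1)
    (hlaw : ∀ k : ℕ, 1 ≤ k → μ {ω | N ω = k} = ENNReal.ofReal ((1 - p) ^ (k - 1) * p)) :
    μ (N ⁻¹' {0}) = 0 := by
  have htotal : ∑' n, μ (N ⁻¹' {n}) = 1 := by
    have hcover : (⋃ n, N ⁻¹' {n}) = univ := by ext; simp
    rw [← measure_iUnion (fun i j hij => (disjoint_singleton.2 hij).preimage N)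
      (fun n => hN (measurableSet_singleton n)), hcover, measure_univ]
  have htail : ∑' m, μ (N ⁻¹' {m + 1}) = 1 := by
    have hgeom : HasSum (fun m : ℕ => (1 - p) ^ m * p) 1 := by
      have h := (hasSum_geometric_of_lt_one (r := 1 - p) (by linarith) (by linarith)).mul_right p
      rwa [sub_sub_cancel, inv_mul_cancel₀ hp0.ne'] at h
    rw [tsum_congr (measure_preimage_succ_of_geometric hlaw),
      ← ENNReal.ofReal_tsum_of_nonneg (fun m => by positivity) hgeom.summable, hgeom.tsum_eq,
      ENNReal.ofReal_one]
  rw [tsum_eq_zero_add' ENNReal.summable, htail] at htotal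
  exact (ENNReal.add_left_inj ENNReal.one_ne_top).1 (by rw [htotal, zero_add])

theorem hasSum_measureReal_mul_affine_of_geometric (hN : Measurable N) (hp0 : 0 < p) (hp1 : p ≤ 1)
    (hlaw : ∀ k : ℕ, 1 ≤ k → μ {ω | N ω = k} = ENNReal.ofReal ((1 - p) ^ (k - 1) * p))
    (a b : ℝ) :
    HasSum (fun n : ℕ => μ.real (N ⁻¹' {n}) * ((n - 1 : ℕ) * a + b)) ((1 / p - 1) * a + b) := by
  have hr : ‖1 - p‖ < 1 := by rw [Real.norm_eq_abs, abs_lt]; constructor <;> linarith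
  have hshift : HasSum (fun m : ℕ => μ.real (N ⁻¹' {m + 1}) * ((m + 1 - 1 : ℕ) * a + b))
      ((1 / p - 1) * a + b) := by
    have h := ((hasSum_coe_mul_geometric_of_norm_lt_one hr).mul_left (p * a)).add
      ((hasSum_geometric_of_lt_one (r := 1 - p) (by linarith) (by linarith)).mul_left (p * b))
    have hval : p * a * ((1 - p) / (1 - (1 - p)) ^ 2) + p * b * (1 - (1 - p))⁻¹
        = (1 / p - 1) * a + b := by
      rw [sub_sub_cancel]
      field_simp
    rw [hval] at h
    refine h.congr_fun fun m => ?_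
    rw [measureReal_def, measure_preimage_succ_of_geometric hlaw,
      ENNReal.toReal_ofReal (by positivity), Nat.add_sub_cancel]
    ring
  rw [← hasSum_nat_add_iff' 1]
  simpa [measureReal_def, measure_preimage_zero_of_geometric hN hp0 hp1 hlaw] using hshift

theorem integral_randomIndex_of_geometric (hN : Measurable N) (hp0 : 0 < p) (hp1 : p ≤ 1)
    (hlaw : ∀ k : ℕ, 1 ≤ k → μ {ω | N ω = k} = ENNReal.ofReal ((1 - p) ^ (k - 1) * p))
    {G : ℕ → Ω → ℝ} (hG : ∀ n, Integrable (G n) μ) (hind : ∀ n, IndepFun N (G n) μ)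
    {a b a' b' : ℝ} (hmean : ∀ n, ∫ ω, G n ω ∂μ = (n - 1 : ℕ) * a + b)
    (habs : ∀ n, ∫ ω, |G n ω| ∂μ ≤ (n - 1 : ℕ) * a' + b') :
    Integrable (fun ω => G (N ω) ω) μ ∧ ∫ ω, G (N ω) ω ∂μ = (1 / p - 1) * a + b := by
  have hint := integrable_randomIndex_of_indepFun hN hG hind
    ((hasSum_measureReal_mul_affine_of_geometric hN hp0 hp1 hlaw a' b').summable.of_nonneg_of_le
      (fun n => mul_nonneg measureReal_nonneg (integral_nonneg fun _ => abs_nonneg _))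
      (fun n => mul_le_mul_of_nonneg_left (habs n) measureReal_nonneg))
  refine ⟨hint, (hasSum_integral_randomIndex_of_indepFun hN (fun n => (hG n).1.aemeasurable)
    hind hint).unique ?_⟩
  simpa only [hmean] using hasSum_measureReal_mul_affine_of_geometric hN hp0 hp1 hlaw a b

end Geometric

section CycleSum

variable {Ω : Type*} {mΩ : MeasurableSpace Ω} {μ : Measure Ω} {Y τle : ℕ → Ω → ℝ}
  {τgt : Ω → ℝ}

def cycleSum (Y τle : ℕ → Ω → ℝ) (τgt : Ω → ℝ) (n : ℕ) (ω : Ω) : ℝ :=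
  ∑ k ∈ Finset.Icc 1 (n - 1), (Y k ω - τle k ω) + (Y n ω - τgt ω)

theorem cycleIncrement_apply (ξ : ℝ) (τt : Ω → ℝ) (N : Ω → ℕ) (ω : Ω) :
    cycleIncrement ξ τt τgt Y τle N ω
      = (Y 0 ω - τt ω) + (τt ⁻¹' Iic ξ).indicator (cycleSum Y τle τgt (N ω)) ω := by
  simp [cycleIncrement, cycleSum, indicator]

theorem integrable_cycleSum (hY : ∀ k, Integrable (Y k) μ) (hle : ∀ k, Integrable (τle k) μ)
    (hgt : Integrable τgt μ) (n : ℕ) : Integrable (cycleSum Y τle τgt n) μ :=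
  (integrable_finsetSum _ fun k _ => (hY k).sub (hle k)).add ((hY n).sub hgt)

theorem integral_cycleSum (hY : ∀ k, Integrable (Y k) μ) (hle : ∀ k, Integrable (τle k) μ)
    (hgt : Integrable τgt μ) {a b c : ℝ} (hYa : ∀ k, ∫ ω, Y k ω ∂μ = a)
    (hleb : ∀ k, ∫ ω, τle k ω ∂μ = b) (hgtc : ∫ ω, τgt ω ∂μ = c) (n : ℕ) :
    ∫ ω, cycleSum Y τle τgt n ω ∂μ = (n - 1 : ℕ) * (a - b) + (a - c) := by
  have hsum : Integrable (fun ω => ∑ k ∈ Finset.Icc 1 (n - 1), (Y k ω - τle k ω)) μ :=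
    integrable_finsetSum _ fun k _ => (hY k).sub (hle k)
  have hlast : Integrable (fun ω => Y n ω - τgt ω) μ := (hY n).sub hgt
  simp only [cycleSum]
  rw [integral_add hsum hlast,
    integral_finsetSum (f := fun k ω => Y k ω - τle k ω) _ fun k _ => (hY k).sub (hle k),
    integral_sub (hY n) hgt]
  simp [integral_sub (hY _) (hle _), hYa, hleb, hgtc, mul_sub]

theorem abs_cycleSum_le (n : ℕ) (ω : Ω) :
    |cycleSum Y τle τgt n ω|
      ≤ cycleSum (fun k ω => |Y k ω|) (fun k ω => -|τle k ω|) (fun ω => -|τgt ω|) n ω := by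
  simp only [cycleSum, sub_neg_eq_add]
  refine (abs_add_le _ _).trans (add_le_add ?_ (abs_sub _ _))
  exact (Finset.abs_sum_le_sum_abs _ _).trans (Finset.sum_le_sum fun k _ => abs_sub _ _)

theorem integral_indicator_cycleSum {τt : Ω → ℝ} (hτt : Measurable τt) {n : ℕ}
    (hind : IndepFun τt (cycleSum Y τle τgt n) μ) (hY : ∀ k, Integrable (Y k) μ)
    (hle : ∀ k, Integrable (τle k) μ) (hgt : Integrable τgt μ) {a b c : ℝ}
    (hYa : ∀ k, ∫ ω, Y k ω ∂μ = a) (hleb : ∀ k, ∫ ω, τle k ω ∂μ = b)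
    (hgtc : ∫ ω, τgt ω ∂μ = c) {s : Set ℝ} (hs : MeasurableSet s) :
    ∫ ω, (τt ⁻¹' s).indicator (cycleSum Y τle τgt n) ω ∂μ
      = (n - 1 : ℕ) * (μ.real (τt ⁻¹' s) * (a - b)) + μ.real (τt ⁻¹' s) * (a - c) := by
  rw [integral_indicator (hτt hs), hind.setIntegral_preimage_eq_mul hτt
    (integrable_cycleSum hY hle hgt n).1.aemeasurable hs,
    integral_cycleSum hY hle hgt hYa hleb hgtc]
  ring

theorem integral_abs_indicator_cycleSum_le (hY : ∀ k, Integrable (Y k) μ)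
    (hle : ∀ k, Integrable (τle k) μ) (hgt : Integrable τgt μ) {a b c : ℝ}
    (hYa : ∀ k, ∫ ω, |Y k ω| ∂μ = a) (hleb : ∀ k, ∫ ω, |τle k ω| ∂μ = b)
    (hgtc : ∫ ω, |τgt ω| ∂μ = c) {A : Set Ω} (hA : MeasurableSet A) (n : ℕ) :
    ∫ ω, |A.indicator (cycleSum Y τle τgt n) ω| ∂μ ≤ (n - 1 : ℕ) * (a + b) + (a + c) := by
  have hYabs : ∀ k, Integrable (fun ω => |Y k ω|) μ := fun k => (hY k).abs
  have hleabs : ∀ k, Integrable (fun ω => -|τle k ω|) μ := fun k => (hle k).abs.neg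
  have hgtabs : Integrable (fun ω => -|τgt ω|) μ := hgt.abs.neg
  have hsum := integrable_cycleSum hY hle hgt n
  calc ∫ ω, |A.indicator (cycleSum Y τle τgt n) ω| ∂μ
      ≤ ∫ ω, |cycleSum Y τle τgt n ω| ∂μ :=
        integral_mono (hsum.indicator hA).abs hsum.abs
          fun ω => norm_indicator_le_norm_self (cycleSum Y τle τgt n) ω
    _ ≤ ∫ ω, cycleSum (fun k ω => |Y k ω|) (fun k ω => -|τle k ω|) (fun ω => -|τgt ω|) n ω ∂μ :=
        integral_mono hsum.abs (integrable_cycleSum hYabs hleabs hgtabs n) (abs_cycleSum_le n)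
    _ = (n - 1 : ℕ) * (a + b) + (a + c) := by
        rw [integral_cycleSum hYabs hleabs hgtabs hYa (b := -b) (c := -c)
          (fun k => by rw [integral_neg, hleb]) (by rw [integral_neg, hgtc])]
        ring

end CycleSum

section Independence

variable {Ω ι β γ : Type*} {mΩ : MeasurableSpace Ω} {μ : Measure Ω}

theorem measurable_biSup_comap [mβ : MeasurableSpace β] (F : ι → Ω → β) {S : Set ι} {i : ι}
    (hi : i ∈ S) : Measurable[⨆ j ∈ S, mβ.comap (F j)] (F i) :=
  (comap_measurable (F i)).mono (le_iSup₂ (f := fun j _ => mβ.comap (F j)) i hi) le_rfl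

theorem ProbabilityTheory.Indep.indepFun_of_measurable [MeasurableSpace β] [MeasurableSpace γ]
    {m₁ m₂ : MeasurableSpace Ω} (h : Indep m₁ m₂ μ) {X : Ω → β} {Z : Ω → γ}
    (hX : Measurable[m₁] X) (hZ : Measurable[m₂] Z) : IndepFun X Z μ :=
  (IndepFun_iff_Indep X Z μ).2 (indep_of_indep_of_le h hX.comap_le hZ.comap_le)

variable {τt τgt : Ω → ℝ} {Y τle : ℕ → Ω → ℝ} {N : Ω → ℕ}

theorem measurable_cycleFamily (hτt : Measurable τt) (hτgt : Measurable τgt)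
    (hY : ∀ k, Measurable (Y k)) (hτle : ∀ k, Measurable (τle k)) (hN : Measurable N)
    (i : ℕ ⊕ (ℕ ⊕ Fin 3)) : Measurable (cycleFamily τt τgt Y τle N i) := by
  rcases i with k | k | j
  · exact hY k
  · exact hτle k
  · fin_cases j
    · exact hτt
    · exact hτgt
    · exact (measurable_from_top (f := (Nat.cast : ℕ → ℝ))).comp hN

theorem measurable_cycleSum_biSup {S : Set (ℕ ⊕ (ℕ ⊕ Fin 3))} (hY : ∀ k, Sum.inl k ∈ S)
    (hτle : ∀ k, Sum.inr (Sum.inl k) ∈ S) (hτgt : Sum.inr (Sum.inr 1) ∈ S) (n : ℕ) :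
    Measurable[⨆ j ∈ S, MeasurableSpace.comap (cycleFamily τt τgt Y τle N j) inferInstance]
      (cycleSum Y τle τgt n) := by
  have hm {i} (hi : i ∈ S) := measurable_biSup_comap (cycleFamily τt τgt Y τle N) hi
  exact (Finset.measurable_sum _ fun k _ => (hm (hY k)).sub (hm (hτle k))).add
    ((hm (hY n)).sub (hm hτgt))

theorem indepFun_cycleSum (hindep : iIndepFun (cycleFamily τt τgt Y τle N) μ)
    (hF : ∀ i, Measurable (cycleFamily τt τgt Y τle N i)) (n : ℕ) :
    IndepFun τt (cycleSum Y τle τgt n) μ := by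
  have h := indep_iSup_of_disjoint (fun i => (hF i).comap_le) hindep.iIndep
    (disjoint_compl_right (a := {Sum.inr (Sum.inr 0)}))
  exact h.indepFun_of_measurable
    (measurable_biSup_comap (cycleFamily τt τgt Y τle N) (mem_singleton _))
    (measurable_cycleSum_biSup (by simp) (by simp) (by simp) n)

theorem indepFun_indicator_cycleSum (hindep : iIndepFun (cycleFamily τt τgt Y τle N) μ)
    (hF : ∀ i, Measurable (cycleFamily τt τgt Y τle N i)) (ξ : ℝ) (n : ℕ) :
    IndepFun N ((τt ⁻¹' Iic ξ).indicator (cycleSum Y τle τgt n)) μ := by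
  have h := indep_iSup_of_disjoint (fun i => (hF i).comap_le) hindep.iIndep
    (disjoint_compl_right (a := {Sum.inr (Sum.inr 2)}))
  have hNcast := measurable_biSup_comap (cycleFamily τt τgt Y τle N)
    (mem_singleton (Sum.inr (Sum.inr 2)))
  have hτt := measurable_biSup_comap (cycleFamily τt τgt Y τle N)
    (show Sum.inr (Sum.inr 0) ∈ ({Sum.inr (Sum.inr 2)} : Set (ℕ ⊕ (ℕ ⊕ Fin 3)))ᶜ by simp)
  refine h.indepFun_of_measurable ?_
    ((measurable_cycleSum_biSup (by simp) (by simp) (by simp) n).indicator (hτt measurableSet_Iic))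
  intro s hs
  convert Nat.measurable_floor.comp hNcast hs using 1
  ext ω
  simp [cycleFamily]

end Independence

theorem cycleIncrement_mean_general
    {Ω : Type*} [MeasureSpace Ω] [IsProbabilityMeasure (ℙ : Measure Ω)]
    (ξ : ℝ)
    (τ τt τgt : Ω → ℝ) (Y τle : ℕ → Ω → ℝ) (N : Ω → ℕ)
    (hτmeas : Measurable τ) (hτtmeas : Measurable τt) (hτgtmeas : Measurable τgt)
    (hYmeas : ∀ k, Measurable (Y k)) (hτlemeas : ∀ k, Measurable (τle k))
    (hNmeas : Measurable N)
    (p : ℝ) (hp0 : 0 < p) (hp1 : p < 1)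
    (hYid : ∀ k, IdentDistrib (Y k) (Y 0) ℙ ℙ)
    (hτle : ∀ k, Measure.map (τle k) ℙ = Measure.map τ (ℙ[|{ω | τ ω ≤ ξ}]))
    (hτgt : Measure.map τgt ℙ = Measure.map τ (ℙ[|{ω | ξ < τ ω}]))
    (hN : ∀ k : ℕ, 1 ≤ k → ℙ {ω | N ω = k} = ENNReal.ofReal ((1 - p) ^ (k - 1) * p))
    (hindep : iIndepFun (cycleFamily τt τgt Y τle N) ℙ)
    -- integrability assumptions
    (hYint : Integrable (Y 0) ℙ) (hτint : Integrable τ ℙ) (hτtint : Integrable τt ℙ) :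
    ∫ ω, cycleIncrement ξ τt τgt Y τle N ω ∂ℙ =
      ((∫ ω, Y 0 ω ∂ℙ) - ∫ ω, τt ω ∂ℙ) +
        (ℙ {ω | τt ω ≤ ξ}).toReal *
          ((1 / p - 1) * ((∫ ω, Y 0 ω ∂ℙ) - ∫ ω, τ ω ∂(ℙ[|{ω | τ ω ≤ ξ}])) +
            ((∫ ω, Y 0 ω ∂ℙ) - ∫ ω, τ ω ∂(ℙ[|{ω | ξ < τ ω}]))) := by
  have hleId k : IdentDistrib (τle k) τ ℙ ℙ[|{ω | τ ω ≤ ξ}] :=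
    ⟨(hτlemeas k).aemeasurable, hτmeas.aemeasurable, hτle k⟩
  have hgtId : IdentDistrib τgt τ ℙ ℙ[|{ω | ξ < τ ω}] :=
    ⟨hτgtmeas.aemeasurable, hτmeas.aemeasurable, hτgt⟩
  have hY k := (hYid k).integrable_iff.2 hYint
  have hle k := (hleId k).integrable_iff.2 (hτint.cond _)
  have hgt := hgtId.integrable_iff.2 (hτint.cond _)
  have hF := measurable_cycleFamily hτtmeas hτgtmeas hYmeas hτlemeas hNmeas
  have hB : MeasurableSet (τt ⁻¹' Iic ξ) := hτtmeas measurableSet_Iic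
  obtain ⟨hint, hval⟩ := integral_randomIndex_of_geometric hNmeas hp0 hp1.le hN
    (fun n => (integrable_cycleSum hY hle hgt n).indicator hB)
    (indepFun_indicator_cycleSum hindep hF ξ)
    (fun n => integral_indicator_cycleSum hτtmeas (indepFun_cycleSum hindep hF n) hY hle hgt
      (fun k => (hYid k).integral_eq) (fun k => (hleId k).integral_eq) hgtId.integral_eq
      measurableSet_Iic)
    (integral_abs_indicator_cycleSum_le hY hle hgt
      (fun k => ((hYid k).comp measurable_abs).integral_eq)
      (fun k => ((hleId k).comp measurable_abs).integral_eq)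
      (hgtId.comp measurable_abs).integral_eq hB)
  simp only [cycleIncrement_apply]
  rw [integral_add (f := fun ω => Y 0 ω - τt ω) (hYint.sub hτtint) hint,
    integral_sub hYint hτtint, hval,
    show (ℙ : Measure Ω).real (τt ⁻¹' Iic ξ) = (ℙ {ω | τt ω ≤ ξ}).toReal from rfl]
  ring

/-- If `Y₀, τ, τ̃` are integrable, then the mean of the cycle increment is
`E X₁ = (E Y₀ − E τ̃) + ℙ(τ̃ ≤ ξ) [ (E N − 1)(E Y₀ − E[τ ∣ τ ≤ ξ]) + (E Y₀ − E[τ ∣ τ > ξ]) ]`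
with `E N = 1 / ℙ(τ > ξ) = 1/p`. -/
theorem cycleIncrement_mean
    {Ω : Type*} [MeasureSpace Ω] [IsProbabilityMeasure (ℙ : Measure Ω)]
    (ξ : ℝ) (hξ : 0 < ξ)
    (τ τt τgt : Ω → ℝ) (Y τle : ℕ → Ω → ℝ) (N : Ω → ℕ)
    (hτmeas : Measurable τ) (hτtmeas : Measurable τt) (hτgtmeas : Measurable τgt)
    (hYmeas : ∀ k, Measurable (Y k)) (hτlemeas : ∀ k, Measurable (τle k))
    (hNmeas : Measurable N)
    (hτpos : ∀ᵐ ω ∂ℙ, 0 < τ ω) (hτtpos : ∀ᵐ ω ∂ℙ, 0 < τt ω)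
    (p : ℝ) (hpdef : p = (ℙ {ω | ξ < τ ω}).toReal) (hp0 : 0 < p) (hp1 : p < 1)
    (hYid : ∀ k, IdentDistrib (Y k) (Y 0) ℙ ℙ) (hYnn : ∀ k, ∀ᵐ ω ∂ℙ, 0 ≤ Y k ω)
    (hτle : ∀ k, Measure.map (τle k) ℙ = Measure.map τ (ℙ[|{ω | τ ω ≤ ξ}]))
    (hτgt : Measure.map τgt ℙ = Measure.map τ (ℙ[|{ω | ξ < τ ω}]))
    (hN : ∀ k : ℕ, 1 ≤ k → ℙ {ω | N ω = k} = ENNReal.ofReal ((1 - p) ^ (k - 1) * p))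
    (hindep : iIndepFun (cycleFamily τt τgt Y τle N) ℙ)
    -- integrability assumptions
    (hYint : Integrable (Y 0) ℙ) (hτint : Integrable τ ℙ) (hτtint : Integrable τt ℙ) :
    ∫ ω, cycleIncrement ξ τt τgt Y τle N ω ∂ℙ =
      ((∫ ω, Y 0 ω ∂ℙ) - ∫ ω, τt ω ∂ℙ) +
        (ℙ {ω | τt ω ≤ ξ}).toReal *
          ((1 / p - 1) * ((∫ ω, Y 0 ω ∂ℙ) - ∫ ω, τ ω ∂(ℙ[|{ω | τ ω ≤ ξ}])) +
            ((∫ ω, Y 0 ω ∂ℙ) - ∫ ω, τ ω ∂(ℙ[|{ω | ξ < τ ω}]))) :=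
  cycleIncrement_mean_general ξ τ τt τgt Y τle N hτmeas hτtmeas hτgtmeas hYmeas hτlemeas hNmeas p
    hp0 hp1 hYid hτle hτgt hN hindep hYint hτint hτtint
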